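/- Let Σ be a finite alphabet with |Σ| ≥ 2, let r, m ≥ 1 be integers, let 0 < δ < 1 and 0 < ε ≤ 1 be reals, and let s > 0 be a real. Let C : Σ^r → Σ^m be an injective encoding whose image has relative distance at least δ (any two distinct codewords differ in at least δ·m coordinates). If √(2ε/(1−δ)) ≥ s, then m ≥ s²·(r−1)/(2ε). -/

import Mathlib

/-!
If distinct codewords of length `m` differ in at least `d ≥ 1` places, restricting the code to
any `m - d + 1` coordinates is still injective, since two codewords agreeing there differ in at
most `d - 1` places. Counting gives the Singleton bound `r ≤ m - ⌈δm⌉ + 1`, i.e.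
`r - 1 ≤ (1 - δ) m`. Squaring `s ≤ √(2ε/(1-δ))` and multiplying the two inequalities gives
`s² (r - 1) ≤ 2ε m`.
-/

open Finset Function

section Singleton

variable {α β κ : Type*} [DecidableEq α] [Fintype κ]

theorem ncard_setOf_ne_eq_hammingDist (x y : κ → α) :
    {i | x i ≠ y i}.ncard = hammingDist x y := by
  rw [hammingDist, ← Set.ncard_coe_finset, coe_filter_univ]

theorem hammingDist_le_card_compl_of_eqOn [DecidableEq κ] {x y : κ → α} {s : Finset κ}
    (h : ∀ i ∈ s, x i = y i) : hammingDist x y ≤ #sᶜ := by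
  refine card_le_card fun i hi ↦ mem_compl.2 fun his ↦ ?_
  exact (mem_filter.1 hi).2 (h i his)

theorem restrict_injective_of_card_compl_lt [DecidableEq κ] {f : β → κ → α} {d : ℕ}
    (hf : ∀ x y, x ≠ y → d ≤ hammingDist (f x) (f y)) {s : Finset κ} (hs : #sᶜ < d) :
    Injective fun x ↦ s.restrict (f x) := by
  intro x y hxy
  by_contra hne
  have hagree : ∀ i ∈ s, f x i = f y i := fun i hi ↦ congrFun hxy ⟨i, hi⟩
  exact (hf x y hne).not_gt (hs.trans_le' (hammingDist_le_card_compl_of_eqOn hagree))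

theorem singleton_bound [Fintype α] [Fintype β] {f : β → κ → α} {d : ℕ} (hd : 1 ≤ d)
    (hf : ∀ x y, x ≠ y → d ≤ hammingDist (f x) (f y)) :
    Fintype.card β ≤ Fintype.card α ^ (Fintype.card κ + 1 - d) := by
  classical
  obtain ⟨s, -, hs⟩ := exists_subset_card_eq (s := (univ : Finset κ))
    (n := Fintype.card κ + 1 - d) (by rw [card_univ]; omega)
  have hcompl : #sᶜ < d := by rw [card_compl]; omega
  simpa [hs] using Fintype.card_le_of_injective _ (restrict_injective_of_card_compl_lt hf hcompl)

theorem singleton_bound_of_relative_distance [Fintype α] {ι : Type*} [Fintype ι]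
    (hα : 2 ≤ Fintype.card α) {f : (ι → α) → κ → α} {δ : ℝ} (hδ0 : 0 < δ) (hδ1 : δ < 1)
    (hκ : 1 ≤ Fintype.card κ)
    (hf : ∀ x y, x ≠ y → δ * Fintype.card κ ≤ hammingDist (f x) (f y)) :
    (Fintype.card ι : ℝ) - 1 ≤ (1 - δ) * Fintype.card κ := by
  classical
  set d := ⌈δ * Fintype.card κ⌉₊
  have hκ' : (1 : ℝ) ≤ Fintype.card κ := by exact_mod_cast hκ
  have hd1 : 1 ≤ d := Nat.one_le_ceil_iff.2 (by positivity)
  have hdκ : d ≤ Fintype.card κ := Nat.ceil_le.2 (by nlinarith)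
  have hsingleton := singleton_bound hd1 fun x y hxy ↦ Nat.ceil_le.2 (hf x y hxy)
  rw [Fintype.card_fun, Nat.pow_le_pow_iff_right hα] at hsingleton
  have hcast : (Fintype.card ι : ℝ) ≤ Fintype.card κ + 1 - d := by
    rw [← Nat.cast_add_one, ← Nat.cast_sub (by omega)]
    exact_mod_cast hsingleton
  linarith [Nat.le_ceil (δ * Fintype.card κ)]

end Singleton

theorem length_lower_bound_of_distance_collision_bound_general
    (σ : Type) [Fintype σ] (hσ : 2 ≤ Fintype.card σ)
    (r m : ℕ) (hm : 1 ≤ m)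
    (δ ε s : ℝ) (hδ0 : 0 < δ) (hδ1 : δ < 1) (hε0 : 0 < ε) (hs : 0 < s)
    (C : (Fin r → σ) → (Fin m → σ))
    (hdist : ∀ x y : Fin r → σ, x ≠ y →
      δ * (m : ℝ) ≤ (({j : Fin m | C x j ≠ C y j}).ncard : ℝ))
    (hbound : s ≤ Real.sqrt (2 * ε / (1 - δ))) :
    s ^ 2 * ((r : ℝ) - 1) / (2 * ε) ≤ (m : ℝ) := by
  classical
  have hrate : (r : ℝ) - 1 ≤ (1 - δ) * m := by
    simpa only [Fintype.card_fin] using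
      singleton_bound_of_relative_distance (f := C) hσ hδ0 hδ1 (by rwa [Fintype.card_fin])
        fun x y hxy ↦ by
          simpa only [Fintype.card_fin, ncard_setOf_ne_eq_hammingDist] using hdist x y hxy
  have h1δ : 0 < 1 - δ := by linarith
  have hsq : s ^ 2 * (1 - δ) ≤ 2 * ε := by
    rw [← le_div_iff₀ h1δ]
    exact (Real.le_sqrt' hs).1 hbound
  rw [div_le_iff₀ (by positivity)]
  calc s ^ 2 * ((r : ℝ) - 1) ≤ s ^ 2 * ((1 - δ) * m) := by gcongr
    _ = s ^ 2 * (1 - δ) * m := by ring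
    _ ≤ 2 * ε * m := by gcongr
    _ = m * (2 * ε) := by ring

/-- Quantitative limitation of the distance-based collision analysis (Section 3): if an
injective encoding `C : Σ^r → Σ^m` has relative distance at least `δ` and the
distance-based collision bound `√(2ε/(1−δ))` is at least `s`, then, by the Singleton
bound, `m ≥ s²(r−1)/(2ε)`. -/
theorem length_lower_bound_of_distance_collision_bound
    (σ : Type) [Fintype σ] (hσ : 2 ≤ Fintype.card σ)
    (r m : ℕ) (hr : 1 ≤ r) (hm : 1 ≤ m)
    (δ ε s : ℝ) (hδ0 : 0 < δ) (hδ1 : δ < 1) (hε0 : 0 < ε) (hε1 : ε ≤ 1) (hs : 0 < s)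
    (C : (Fin r → σ) → (Fin m → σ)) (hinj : Function.Injective C)
    (hdist : ∀ x y : Fin r → σ, x ≠ y →
      δ * (m : ℝ) ≤ (({j : Fin m | C x j ≠ C y j}).ncard : ℝ))
    (hbound : s ≤ Real.sqrt (2 * ε / (1 - δ))) :
    s ^ 2 * ((r : ℝ) - 1) / (2 * ε) ≤ (m : ℝ) :=
  length_lower_bound_of_distance_collision_bound_general σ hσ r m hm δ ε s hδ0 hδ1 hε0 hs C hdist
    hbound
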